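/- arXiv:1708.09141 — 2 statements merged into one kernel-verified Lean document; each statement's English description precedes it below -/
import Mathlib

section
/- The only biconnected 4-regular multigraph of treewidth 1 is the closed necklace on two vertices (two vertices joined by four parallel edges), and the only biconnected 4-regular multigraph on three vertices is the closed necklace on three vertices (a triangle with all edges doubled). -/
open scoped Classical

/-- A finite multigraph without loops: a vertex type, an edge type, and an
incidence map assigning to each edge an unordered pair of distinct vertices. -/
structure MGraph where
  V : Type
  E : Type
  finV : Finite V
  finE : Finite E
  ends : E → Sym2 V
  noLoop : ∀ e, ¬ (ends e).IsDiag

namespace MGraph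

variable (G : MGraph)

/-- Degree of a vertex counting only edges in the edge set `F`. -/
noncomputable def degOn (F : Set G.E) (v : G.V) : ℕ := {e | e ∈ F ∧ v ∈ G.ends e}.ncard

/-- Degree of a vertex. -/
noncomputable def deg (v : G.V) : ℕ := G.degOn Set.univ v

/-- Adjacency using only edges from `F`. -/
def AdjOn (F : Set G.E) (a b : G.V) : Prop := ∃ e ∈ F, G.ends e = s(a, b)

/-- Reachability using only edges from `F`. -/
def ReachOn (F : Set G.E) : G.V → G.V → Prop := Relation.ReflTransGen (G.AdjOn F)

/-- Connectivity of a multigraph. -/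
def Connected : Prop := Nonempty G.V ∧ ∀ a b : G.V, G.ReachOn Set.univ a b

/-- A set of edges forms a cycle: it is nonempty, every vertex has degree 0 or 2
in it, and any two of its endpoints are joined by a path inside it. -/
def IsCycle (C : Set G.E) : Prop :=
  C.Nonempty ∧ (∀ v, G.degOn C v = 0 ∨ G.degOn C v = 2) ∧
    ∀ e ∈ C, ∀ f ∈ C, ∀ a b : G.V, a ∈ G.ends e → b ∈ G.ends f → G.ReachOn C a b

/-- A cycle decomposition of the edge set `F`: a set of cycles inside `F` such
that every edge of `F` lies in exactly one of them. -/
def IsCycleDecompOn (F : Set G.E) (D : Set (Set G.E)) : Prop :=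
  (∀ C ∈ D, G.IsCycle C ∧ C ⊆ F) ∧ ∀ e ∈ F, ∃! C, C ∈ D ∧ e ∈ C

/-- A cycle decomposition of the graph. -/
def IsCycleDecomp (D : Set (Set G.E)) : Prop := G.IsCycleDecompOn Set.univ D

/-- Minimum number of cycles in a cycle decomposition of `F`. -/
noncomputable def cOn (F : Set G.E) : ℕ :=
  sInf {n | ∃ D, G.IsCycleDecompOn F D ∧ D.ncard = n}

/-- Maximum number of cycles in a cycle decomposition of `F`. -/
noncomputable def nuOn (F : Set G.E) : ℕ :=
  sSup {n | ∃ D, G.IsCycleDecompOn F D ∧ D.ncard = n}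

/-- Minimum cycle number. -/
noncomputable def c : ℕ := G.cOn Set.univ

/-- Maximum cycle number. -/
noncomputable def nu : ℕ := G.nuOn Set.univ

/-- A multigraph is Eulerian if it admits a closed walk traversing every edge
exactly once. -/
def IsEulerian : Prop :=
  ∃ (vs : List G.V) (es : List G.E),
    vs.length = es.length + 1 ∧
    (∀ (i : ℕ) (e : G.E) (a b : G.V), es[i]? = some e → vs[i]? = some a →
      vs[i + 1]? = some b → G.ends e = s(a, b)) ∧
    vs.head? = vs.getLast? ∧ es.Nodup ∧ ∀ e : G.E, e ∈ es

/-- A cut-edge (bridge): its endpoints are disconnected after its removal. -/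
def IsBridge (e : G.E) : Prop :=
  ∃ a b, G.ends e = s(a, b) ∧ ¬ G.ReachOn {e}ᶜ a b

/-- 2-edge-connectivity: connected and without cut-edges. -/
def TwoEdgeConnected : Prop := G.Connected ∧ ∀ e, ¬ G.IsBridge e

/-- Reachability avoiding a vertex. -/
def ReachAvoid (v : G.V) (a b : G.V) : Prop :=
  Relation.ReflTransGen (fun x y => x ≠ v ∧ y ≠ v ∧ G.AdjOn Set.univ x y) a b

/-- A cut-vertex: two vertices in the same component get separated by its removal. -/
def IsCutVertex (v : G.V) : Prop :=
  ∃ a b, a ≠ v ∧ b ≠ v ∧ G.ReachOn Set.univ a b ∧ ¬ G.ReachAvoid v a b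

/-- Biconnected: connected, at least two vertices, and without cut-vertices. -/
def Biconnected : Prop :=
  G.Connected ∧ 2 ≤ Nat.card G.V ∧ ∀ v, ¬ G.IsCutVertex v

/-- The vertices covered by a set of edges. -/
def VertexSetOf (C : Set G.E) : Set G.V := {v | ∃ e ∈ C, v ∈ G.ends e}

/-- No two edge-disjoint cycles share more than two vertices. -/
def NoTwoCyclesShareThree : Prop :=
  ∀ C1 C2 : Set G.E, G.IsCycle C1 → G.IsCycle C2 → Disjoint C1 C2 →
    (G.VertexSetOf C1 ∩ G.VertexSetOf C2).ncard ≤ 2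

/-- An Eulerian multiedge: two vertices joined by an even positive number of
parallel edges. -/
def IsEulerianMultiedge : Prop :=
  Nat.card G.V = 2 ∧ 0 < Nat.card G.E ∧ Even (Nat.card G.E)

end MGraph

/-- Isomorphism of multigraphs. -/
structure MIso (G H : MGraph) where
  vEquiv : G.V ≃ H.V
  eEquiv : G.E ≃ H.E
  ends_eq : ∀ e, H.ends (eEquiv e) = (G.ends e).map vEquiv

namespace MGraph

/-- Vertex-identification: glue `u1 ∈ V(G1)` with `u2 ∈ V(G2)`. -/
noncomputable def vertexIdent (G1 G2 : MGraph) (u1 : G1.V) (u2 : G2.V) : MGraph where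
  V := G1.V ⊕ {v : G2.V // v ≠ u2}
  E := G1.E ⊕ G2.E
  finV := by have := G1.finV; have := G2.finV; infer_instance
  finE := by have := G1.finE; have := G2.finE; infer_instance
  ends := fun e =>
    match e with
    | Sum.inl e => (G1.ends e).map Sum.inl
    | Sum.inr e => (G2.ends e).map
        (fun v => if h : v = u2 then Sum.inl u1 else Sum.inr ⟨v, h⟩)
  noLoop := by
    rintro (e | e) h
    · exact G1.noLoop e ((Sym2.isDiag_map Sum.inl_injective).mp h)
    · refine G2.noLoop e ((Sym2.isDiag_map ?_).mp h)
      intro a b hab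
      by_cases ha : a = u2 <;> by_cases hb : b = u2 <;>
        simp [ha, hb] at hab ⊢ <;> simp_all

/-- Edge-identification: delete `e1` and `e2` (with endpoints `u1, v1` resp.
`u2, v2`) and add the new edges `u1u2` and `v1v2`. -/
def edgeIdent (G1 G2 : MGraph) (e1 : G1.E) (e2 : G2.E)
    (u1 v1 : G1.V) (u2 v2 : G2.V) : MGraph where
  V := G1.V ⊕ G2.V
  E := {e : G1.E // e ≠ e1} ⊕ {e : G2.E // e ≠ e2} ⊕ Bool
  finV := by have := G1.finV; have := G2.finV; infer_instance
  finE := by have := G1.finE; have := G2.finE; infer_instance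
  ends := fun e =>
    match e with
    | Sum.inl e => (G1.ends e.1).map Sum.inl
    | Sum.inr (Sum.inl e) => (G2.ends e.1).map Sum.inr
    | Sum.inr (Sum.inr true) => s(Sum.inl u1, Sum.inr u2)
    | Sum.inr (Sum.inr false) => s(Sum.inl v1, Sum.inr v2)
  noLoop := by
    rintro (e | e | b) h
    · exact G1.noLoop e.1 ((Sym2.isDiag_map Sum.inl_injective).mp h)
    · exact G2.noLoop e.1 ((Sym2.isDiag_map Sum.inr_injective).mp h)
    · cases b <;> simp [Sym2.mk_isDiag_iff] at h

/-- Vertex-edge-identification: identify `v1` with `v2`, delete `e1 = u1v1`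
and `e2 = u2v2`, and add a new edge `u1u2`. -/
noncomputable def vertexEdgeIdent (G1 G2 : MGraph) (e1 : G1.E) (e2 : G2.E)
    (u1 v1 : G1.V) (u2 v2 : G2.V) (h2 : G2.ends e2 = s(u2, v2)) : MGraph where
  V := G1.V ⊕ {w : G2.V // w ≠ v2}
  E := {e : G1.E // e ≠ e1} ⊕ {e : G2.E // e ≠ e2} ⊕ Unit
  finV := by have := G1.finV; have := G2.finV; infer_instance
  finE := by have := G1.finE; have := G2.finE; infer_instance
  ends := fun e =>
    match e with
    | Sum.inl e => (G1.ends e.1).map Sum.inl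
    | Sum.inr (Sum.inl e) => (G2.ends e.1).map
        (fun w => if h : w = v2 then Sum.inl v1 else Sum.inr ⟨w, h⟩)
    | Sum.inr (Sum.inr _) =>
        s(Sum.inl u1, Sum.inr ⟨u2, fun h =>
          G2.noLoop e2 (by rw [h2, h]; exact Sym2.mk_isDiag_iff.mpr rfl)⟩)
  noLoop := by
    rintro (e | e | u) h
    · exact G1.noLoop e.1 ((Sym2.isDiag_map Sum.inl_injective).mp h)
    · refine G2.noLoop e.1 ((Sym2.isDiag_map ?_).mp h)
      intro a b hab
      by_cases ha : a = v2 <;> by_cases hb : b = v2 <;>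
        simp [ha, hb] at hab ⊢ <;> simp_all
    · simp [Sym2.mk_isDiag_iff] at h

/-- Delete an edge from a multigraph. -/
def deleteEdge (G : MGraph) (e : G.E) : MGraph where
  V := G.V
  E := {f : G.E // f ≠ e}
  finV := G.finV
  finE := by have := G.finE; infer_instance
  ends := fun f => G.ends f.1
  noLoop := fun f => G.noLoop f.1

/-- `Sym2.pmap`-style map into a subtype. -/
noncomputable def sym2Pmap {α β : Type} {p : α → Prop} (f : ∀ a, p a → β)
    (s : Sym2 α) (h : ∀ a ∈ s, p a) : Sym2 β :=
  let z := Classical.choose (Quot.exists_rep s)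
  s(f z.1 (h z.1 (by
      have hz : Quot.mk _ z = s := Classical.choose_spec (Quot.exists_rep s)
      rw [← hz]; exact Sym2.mem_mk_left z.1 z.2)),
    f z.2 (h z.2 (by
      have hz : Quot.mk _ z = s := Classical.choose_spec (Quot.exists_rep s)
      rw [← hz]; exact Sym2.mem_mk_right z.1 z.2)))

/-- Delete a vertex (and all incident edges) from a multigraph. -/
noncomputable def deleteVertex (G : MGraph) (v : G.V) : MGraph where
  V := {w : G.V // w ≠ v}
  E := {e : G.E // v ∉ G.ends e}
  finV := by have := G.finV; infer_instance
  finE := by have := G.finE; infer_instance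
  ends := fun e => sym2Pmap (fun a ha => (⟨a, ha⟩ : {w : G.V // w ≠ v}))
    (G.ends e.1) (fun a ha hav => e.2 (hav ▸ ha))
  noLoop := by
    rintro ⟨e, he⟩ h
    apply G.noLoop e
    unfold sym2Pmap at h
    have hz : Quot.mk _ (Classical.choose (Quot.exists_rep (G.ends e))) = G.ends e :=
      Classical.choose_spec (Quot.exists_rep (G.ends e))
    rw [Sym2.mk_isDiag_iff] at h
    have : (Classical.choose (Quot.exists_rep (G.ends e))).1 =
        (Classical.choose (Quot.exists_rep (G.ends e))).2 := congrArg Subtype.val h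
    rw [← hz]
    exact Sym2.mk_isDiag_iff.mpr this

end MGraph

/-- A tree decomposition of a multigraph: a tree of bags covering all vertices
and edges such that the bags containing a given vertex form a subtree. -/
structure TreeDecomp (G : MGraph) where
  ι : Type
  t : SimpleGraph ι
  isTree : t.IsTree
  bag : ι → Set G.V
  covers_vertex : ∀ v : G.V, ∃ i, v ∈ bag i
  covers_edge : ∀ e : G.E, ∃ i, ∀ v ∈ G.ends e, v ∈ bag i
  bags_connected : ∀ v : G.V, (SimpleGraph.induce {i | v ∈ bag i} t).Connected

namespace MGraph

/-- The graph has treewidth at most `k`. -/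
def twLE (G : MGraph) (k : ℕ) : Prop :=
  ∃ T : TreeDecomp G, ∀ i, (T.bag i).ncard ≤ k + 1

/-- Treewidth of a multigraph. -/
noncomputable def treewidth (G : MGraph) : ℕ := sInf {k | G.twLE k}

/-- The closed necklace on `n ≥ 2` vertices: a cycle of length `n` with all
of its edges doubled. -/
def necklace (n : ℕ) (hn : 2 ≤ n) : MGraph where
  V := ZMod n
  E := ZMod n × Bool
  finV := by have : NeZero n := ⟨by omega⟩; infer_instance
  finE := by have : NeZero n := ⟨by omega⟩; infer_instance
  ends := fun e => s(e.1, e.1 + 1)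
  noLoop := by
    have : Fact (1 < n) := ⟨hn⟩
    intro e h
    rw [Sym2.mk_isDiag_iff] at h
    exact one_ne_zero (left_eq_add.mp h)

end MGraph

/-!
A tree decomposition of width one cannot host three pairwise disjoint connected vertex sets
that are pairwise joined by edges: the subtrees of bags meeting them intersect pairwise, so by
the Helly property of subtrees of a tree some bag meets all three. In a biconnected graph with
at least three vertices, a path `a - b - c` together with a path from `c` back to a neighbour of
`a` that avoids `a` and `b` yields three such sets, so treewidth one forces two vertices, and
4-regularity then forces four parallel edges. On three vertices, the degree equations
`m₁ + m₂ = m₂ + m₃ = m₃ + m₁ = 4` for the edge multiplicities force each of them to be `2`.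
-/

namespace SimpleGraph

variable {ι : Type*} {t : SimpleGraph ι}

theorem IsAcyclic.exists_mem_support_of_walk (ht : t.IsAcyclic) {x y z a b : ι}
    (P : t.Walk x y) (Q : t.Walk y z) (W : t.Walk a b) (ha : a ∈ P.support)
    (hb : b ∈ Q.support) (hW : ∀ v ∈ W.support, v ∈ P.support ∨ v ∈ Q.support) :
    ∃ v ∈ W.support, v ∈ P.support ∧ v ∈ Q.support := by
  induction W with
  | nil => exact ⟨_, Walk.start_mem_support _, ha, hb⟩
  | @cons u v w huv W ih =>
    by_cases hv : v ∈ P.support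
    · obtain ⟨o, ho, hoP, hoQ⟩ := ih hv hb fun o ho => hW o (by simp [ho])
      exact ⟨o, by simp [ho], hoP, hoQ⟩
    by_cases hu : u ∈ Q.support
    · exact ⟨u, Walk.start_mem_support _, ha, hu⟩
    have hvQ : v ∈ Q.support := (hW v (by simp)).resolve_left hv
    -- `uv` is a bridge, yet `P` from `u` followed by `Q` up to `v` avoids it
    have he := isBridge_iff_forall_walk_mem_edges.mp
      (isAcyclic_iff_forall_adj_isBridge.mp ht huv) ((P.dropUntil u ha).append (Q.takeUntil v hvQ))
    rw [Walk.edges_append, List.mem_append] at he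
    rcases he with he | he
    · exact absurd (P.snd_mem_support_of_mem_edges (P.edges_dropUntil_subset_edges ha he)) hv
    · exact absurd (Q.fst_mem_support_of_mem_edges (Q.edges_takeUntil_subset_edges hvQ he)) hu

theorem IsAcyclic.exists_mem_support_of_triangle (ht : t.IsAcyclic) {x y z : ι}
    (P : t.Walk x y) (Q : t.Walk y z) (R : t.Walk x z) :
    ∃ o, o ∈ P.support ∧ o ∈ Q.support ∧ o ∈ R.support := by
  have hR : R.bypass = (P.append Q).bypass :=
    congrArg Subtype.val <|
      (ht.subsingleton_path x z).elim ⟨_, R.bypass_isPath⟩ ⟨_, (P.append Q).bypass_isPath⟩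
  obtain ⟨o, ho, hoP, hoQ⟩ := ht.exists_mem_support_of_walk P Q R.bypass
    P.start_mem_support Q.end_mem_support fun v hv =>
      (Walk.mem_support_append_iff P Q).mp ((P.append Q).support_bypass_subset_support (hR ▸ hv))
  exact ⟨o, hoP, hoQ, R.support_bypass_subset_support ho⟩

end SimpleGraph

open Relation

theorem Relation.ReflTransGen.exists_avoiding_and_rel {α : Type*} {r : α → α → Prop} {x y : α}
    (h : ReflTransGen r x y) (hxy : x ≠ y) :
    ∃ z, ReflTransGen (fun u v => r u v ∧ u ≠ y ∧ v ≠ y) x z ∧ r z y := by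
  induction h using ReflTransGen.head_induction_on with
  | refl => exact absurd rfl hxy
  | @head x x' hxx' _ ih =>
    by_cases hx' : x' = y
    · exact ⟨x, .refl, hx' ▸ hxx'⟩
    obtain ⟨z, hx'z, hzy⟩ := ih hx'
    exact ⟨z, .head ⟨hxx', hxy, hx'⟩ hx'z, hzy⟩

namespace MGraph

variable {G : MGraph}

theorem AdjOn.ne {F : Set G.E} {a b : G.V} (h : G.AdjOn F a b) : a ≠ b := by
  obtain ⟨e, -, he⟩ := h
  rintro rfl
  exact G.noLoop e (he ▸ Sym2.mk_isDiag_iff.mpr rfl)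

end MGraph

namespace TreeDecomp

variable {G : MGraph} (T : TreeDecomp G)

theorem exists_bag_of_adjOn {F : Set G.E} {a b : G.V} (h : G.AdjOn F a b) :
    ∃ i, a ∈ T.bag i ∧ b ∈ T.bag i := by
  obtain ⟨e, -, he⟩ := h
  obtain ⟨i, hi⟩ := T.covers_edge e
  exact ⟨i, hi a (he ▸ Sym2.mem_mk_left a b), hi b (he ▸ Sym2.mem_mk_right a b)⟩

theorem exists_walk_of_mem_bag (v : G.V) {i j : T.ι} (hi : v ∈ T.bag i) (hj : v ∈ T.bag j) :
    ∃ W : T.t.Walk i j, ∀ k ∈ W.support, v ∈ T.bag k := by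
  obtain ⟨W⟩ := (T.bags_connected v).preconnected ⟨i, hi⟩ ⟨j, hj⟩
  refine ⟨W.map (SimpleGraph.Embedding.induce _).toHom, fun k hk => ?_⟩
  obtain ⟨⟨k, hvk⟩, -, rfl⟩ := List.mem_map.mp (SimpleGraph.Walk.support_map _ W ▸ hk)
  exact hvk

theorem exists_walk_of_reflTransGen {U : Set G.V} {c d : G.V}
    (h : ReflTransGen (fun u v => u ∈ U ∧ v ∈ U ∧ G.AdjOn Set.univ u v) c d) (hc : c ∈ U)
    {i j : T.ι} (hi : c ∈ T.bag i) (hj : d ∈ T.bag j) :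
    ∃ W : T.t.Walk i j, ∀ k ∈ W.support, ∃ u ∈ U, u ∈ T.bag k := by
  induction h using ReflTransGen.head_induction_on generalizing i with
  | refl =>
    obtain ⟨W, hW⟩ := T.exists_walk_of_mem_bag d hi hj
    exact ⟨W, fun k hk => ⟨d, hc, hW k hk⟩⟩
  | @head c c' hcc' _ ih =>
    obtain ⟨-, hc', hadj⟩ := hcc'
    obtain ⟨k, hck, hc'k⟩ := T.exists_bag_of_adjOn hadj
    obtain ⟨W₁, hW₁⟩ := T.exists_walk_of_mem_bag c hi hck
    obtain ⟨W₂, hW₂⟩ := ih hc' hc'k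
    refine ⟨W₁.append W₂, fun l hl => ?_⟩
    rcases (SimpleGraph.Walk.mem_support_append_iff W₁ W₂).mp hl with hl | hl
    exacts [⟨c, hc, hW₁ l hl⟩, hW₂ l hl]

theorem exists_two_lt_ncard_bag {U : Set G.V} {a b c d : G.V} (haU : a ∉ U) (hbU : b ∉ U)
    (hab : G.AdjOn Set.univ a b) (hbc : G.AdjOn Set.univ b c) (hda : G.AdjOn Set.univ d a)
    (hcd : ReflTransGen (fun u v => u ∈ U ∧ v ∈ U ∧ G.AdjOn Set.univ u v) c d) (hc : c ∈ U) :
    ∃ i, 2 < (T.bag i).ncard := by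
  have := G.finV
  obtain ⟨x, hax, hbx⟩ := T.exists_bag_of_adjOn hab
  obtain ⟨y, hby, hcy⟩ := T.exists_bag_of_adjOn hbc
  obtain ⟨z, hdz, haz⟩ := T.exists_bag_of_adjOn hda
  obtain ⟨P, hP⟩ := T.exists_walk_of_mem_bag b hbx hby
  obtain ⟨Q, hQ⟩ := T.exists_walk_of_reflTransGen hcd hc hcy hdz
  obtain ⟨R, hR⟩ := T.exists_walk_of_mem_bag a hax haz
  obtain ⟨o, hoP, hoQ, hoR⟩ := T.isTree.isAcyclic.exists_mem_support_of_triangle P Q R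
  obtain ⟨u, huU, huo⟩ := hQ o hoQ
  refine ⟨o, lt_of_lt_of_le ?_ (Set.ncard_le_ncard (s := {a, b, u}) ?_)⟩
  · rw [Set.ncard_eq_three.mpr ⟨a, b, u, hab.ne, ne_of_mem_of_not_mem huU haU |>.symm,
      ne_of_mem_of_not_mem huU hbU |>.symm, rfl⟩]
    norm_num
  · rintro v (rfl | rfl | rfl)
    exacts [hR o hoR, hP o hoP, huo]

end TreeDecomp

namespace MGraph

variable {G : MGraph}

theorem Biconnected.reachAvoid (hG : G.Biconnected) {v a b : G.V} (ha : a ≠ v) (hb : b ≠ v) :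
    G.ReachAvoid v a b :=
  not_not.mp fun h => hG.2.2 v ⟨a, b, ha, hb, hG.1.2 a b, h⟩

theorem Biconnected.exists_adjOn_ne (hG : G.Biconnected) (h3 : 3 ≤ Nat.card G.V) {a b : G.V}
    (hab : a ≠ b) : ∃ c, c ≠ a ∧ G.AdjOn Set.univ b c := by
  have := G.finV
  obtain ⟨x, hxa, hxb⟩ :=
    ENat.exists_ne_ne_of_three_le (by simpa [ENat.card_eq_coe_natCard] using h3) a b
  rcases (hG.reachAvoid hab.symm hxa).cases_head with rfl | ⟨c, ⟨-, hca, hbc⟩, -⟩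
  exacts [absurd rfl hxb, ⟨c, hca, hbc⟩]

theorem Biconnected.not_twLE_one (hG : G.Biconnected) (h3 : 3 ≤ Nat.card G.V) : ¬ G.twLE 1 := by
  have := G.finV
  obtain ⟨x⟩ := hG.1.1
  obtain ⟨a, hax, -⟩ :=
    ENat.exists_ne_ne_of_three_le (by simpa [ENat.card_eq_coe_natCard] using h3) x x
  -- a path `a - b - c` with `a ≠ c`; since `b` is no cut-vertex, `c` reaches `a` avoiding `b`
  obtain ⟨b, -, hab⟩ := hG.exists_adjOn_ne h3 hax.symm
  obtain ⟨c, hca, hbc⟩ := hG.exists_adjOn_ne h3 hab.ne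
  obtain ⟨d, hcd, hda⟩ := (hG.reachAvoid hbc.ne.symm hab.ne).exists_avoiding_and_rel hca
  rintro ⟨T, hT⟩
  obtain ⟨i, hi⟩ := T.exists_two_lt_ncard_bag (U := {a, b}ᶜ) (by simp) (by simp) hab hbc hda.2.2
    (ReflTransGen.mono (fun u v ⟨⟨hub, hvb, huv⟩, hua, hva⟩ => ⟨by simp [*], by simp [*], huv⟩)
      _ _ hcd)
    (by simp [hca, hbc.ne.symm])
  exact absurd (hT i) (by omega)

theorem twLE_treewidth (h : G.treewidth ≠ 0) : G.twLE G.treewidth := by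
  refine Nat.sInf_mem (s := {k | G.twLE k}) (Set.nonempty_iff_ne_empty.mpr fun hempty => h ?_)
  rw [treewidth, hempty, Nat.sInf_empty]

theorem Biconnected.card_eq_two_of_twLE_one (hG : G.Biconnected) (h : G.twLE 1) :
    Nat.card G.V = 2 := by
  have := hG.2.1
  have := mt hG.not_twLE_one (not_not.mpr h)
  omega

theorem exists_ends_eq (e : G.E) : ∃ p q, G.ends e = s(p, q) ∧ p ≠ q := by
  induction h : G.ends e using Sym2.ind with
  | _ p q => exact ⟨p, q, rfl, fun hpq => G.noLoop e (h ▸ Sym2.mk_isDiag_iff.mpr hpq)⟩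

theorem deg_eq_card_of_card_eq_two (hV : Nat.card G.V = 2) (v : G.V) : G.deg v = Nat.card G.E := by
  have := G.finV
  let φ : G.V ≃ ZMod 2 := Finite.equivFinOfCardEq hV
  have hmem (e : G.E) : v ∈ G.ends e := by
    obtain ⟨p, q, he, hpq⟩ := G.exists_ends_eq e
    have key : ∀ x y z : ZMod 2, x ≠ y → z = x ∨ z = y := by decide
    rw [he, Sym2.mem_iff, ← φ.injective.eq_iff, ← φ.injective.eq_iff]
    exact key _ _ _ (φ.injective.ne hpq)
  simp [deg, degOn, hmem, Set.ncard_univ]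

theorem nonempty_miso_necklace_two (hV : Nat.card G.V = 2) (hE : Nat.card G.E = 4) :
    Nonempty (MIso G (necklace 2 (by norm_num))) := by
  have := G.finV
  have := G.finE
  let φ : G.V ≃ ZMod 2 := Finite.equivFinOfCardEq hV
  obtain ⟨ψ⟩ : Nonempty (G.E ≃ ZMod 2 × Bool) := Finite.card_eq.mp (by simp [hE])
  refine ⟨⟨φ, ψ, fun e => ?_⟩⟩
  obtain ⟨p, q, he, hpq⟩ := G.exists_ends_eq e
  have key : ∀ i x y : ZMod 2, x ≠ y → s(i, i + 1) = s(x, y) := by decide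
  rw [he, Sym2.map_mk]
  exact key _ _ _ (φ.injective.ne hpq)

noncomputable def mult (a b : G.V) : ℕ := {e | G.ends e = s(a, b)}.ncard

theorem mult_comm (a b : G.V) : G.mult a b = G.mult b a := by
  simp only [mult, Sym2.eq_swap]

theorem deg_eq_mult_add_mult {v w₁ w₂ : G.V} (hw : w₁ ≠ w₂)
    (h : ∀ e, v ∈ G.ends e → G.ends e = s(v, w₁) ∨ G.ends e = s(v, w₂)) :
    G.deg v = G.mult v w₁ + G.mult v w₂ := by
  have := G.finE
  have hsplit : {e | e ∈ Set.univ ∧ v ∈ G.ends e} =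
      {e | G.ends e = s(v, w₁)} ∪ {e | G.ends e = s(v, w₂)} := by
    ext e
    refine ⟨fun hv => h e hv.2, ?_⟩
    rintro (he | he) <;> exact ⟨trivial, he ▸ Sym2.mem_mk_left _ _⟩
  rw [deg, degOn, hsplit, Set.ncard_union_eq (Set.disjoint_left.mpr fun e h₁ h₂ =>
    hw (Sym2.congr_right.mp (h₁.symm.trans h₂))), mult, mult]

theorem necklace_edge_injective {n : ℕ} (hn : 3 ≤ n) :
    Function.Injective fun i : ZMod n => s(i, i + 1) := by
  intro i j hij
  rcases Sym2.eq_iff.mp hij with ⟨h, -⟩ | ⟨hi, hj⟩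
  · exact h
  · have h2 : ((2 : ℕ) : ZMod n) = 0 := by
      have : j + 1 + 1 = j + 0 := by rw [← hi, hj, add_zero]
      rw [add_assoc] at this
      exact_mod_cast add_left_cancel this
    have := Nat.le_of_dvd two_pos ((ZMod.natCast_eq_zero_iff 2 n).mp h2)
    omega

theorem nonempty_miso_necklace {n : ℕ} (hn : 3 ≤ n) (φ : ZMod n ≃ G.V)
    (hends : ∀ e, ∃ i, G.ends e = s(φ i, φ (i + 1))) (hmult : ∀ i, G.mult (φ i) (φ (i + 1)) = 2) :
    Nonempty (MIso G (necklace n (by omega))) := by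
  have := G.finE
  choose κ hκ using hends
  have hfiber (i : ZMod n) : Nat.card {e // κ e = i} = 2 := by
    rw [← hmult i, mult, ← Nat.card_coe_set_eq]
    congr! 3 with e
    refine ⟨fun h => h ▸ hκ e, fun h => necklace_edge_injective hn ?_⟩
    have := congrArg (Sym2.map φ.symm) ((hκ e).symm.trans h)
    simpa using this
  have (i : ZMod n) : Nonempty ({e // κ e = i} ≃ Bool) := Finite.card_eq.mp (by simp [hfiber])
  let ψ : G.E ≃ ZMod n × Bool := (Equiv.sigmaFiberEquiv κ).symm.trans
    ((Equiv.sigmaCongrRight fun i => (this i).some).trans (Equiv.sigmaEquivProd _ _))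
  refine ⟨⟨φ.symm, ψ, fun e => ?_⟩⟩
  show s((ψ e).1, (ψ e).1 + 1) = (G.ends e).map φ.symm
  rw [hκ e, Sym2.map_mk, φ.symm_apply_apply, φ.symm_apply_apply]
  rfl

theorem nonempty_miso_necklace_three (hV : Nat.card G.V = 3) (hdeg : ∀ v, G.deg v = 4) :
    Nonempty (MIso G (necklace 3 (by norm_num))) := by
  have := G.finV
  let φ : ZMod 3 ≃ G.V := (Finite.equivFinOfCardEq hV).symm
  have hends (e : G.E) : ∃ i, G.ends e = s(φ i, φ (i + 1)) := by
    obtain ⟨p, q, he, hpq⟩ := G.exists_ends_eq e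
    have key : ∀ x y : ZMod 3, x ≠ y → ∃ i, s(x, y) = s(i, i + 1) := by decide
    obtain ⟨i, hi⟩ := key _ _ (φ.symm.injective.ne hpq)
    exact ⟨i, by simpa [he] using congrArg (Sym2.map φ) hi⟩
  have hdeg' (i : ZMod 3) :
      G.mult (φ i) (φ (i + 1)) + G.mult (φ (i - 1)) (φ (i - 1 + 1)) = 4 := by
    rw [← hdeg (φ i), sub_add_cancel, mult_comm (φ (i - 1))]
    refine (deg_eq_mult_add_mult (φ.injective.ne (by decide +revert)) fun e he => ?_).symm
    obtain ⟨j, hj⟩ := hends e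
    rw [hj, Sym2.mem_iff, φ.injective.eq_iff, φ.injective.eq_iff] at he
    rcases he with rfl | rfl
    · exact .inl hj
    · exact .inr (by rw [hj, add_sub_cancel_right, Sym2.eq_swap])
  refine nonempty_miso_necklace le_rfl φ hends fun i => ?_
  have h0 := hdeg' 0
  have h1 := hdeg' 1
  have h2 := hdeg' 2
  obtain rfl | rfl | rfl : i = 0 ∨ i = 1 ∨ i = 2 := by decide +revert
  all_goals simp only [show (0 : ZMod 3) - 1 = 2 by decide, show (1 : ZMod 3) - 1 = 0 by decide,
    show (2 : ZMod 3) - 1 = 1 by decide] at h0 h1 h2; omega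

end MGraph

/-- the only biconnected 4-regular multigraph of treewidth 1 is
the closed necklace on two vertices, and the only biconnected 4-regular
multigraph on three vertices is the closed necklace on three vertices. -/
theorem necklace_characterizations :
    (∀ G : MGraph, G.Biconnected → (∀ v, G.deg v = 4) → G.treewidth = 1 →
      Nonempty (MIso G (MGraph.necklace 2 (by norm_num)))) ∧
    (∀ G : MGraph, G.Biconnected → (∀ v, G.deg v = 4) → Nat.card G.V = 3 →
      Nonempty (MIso G (MGraph.necklace 3 (by norm_num)))) := by
  refine ⟨fun G hG hdeg htw => ?_, fun G _ hdeg hV => MGraph.nonempty_miso_necklace_three hV hdeg⟩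
  have hV : Nat.card G.V = 2 := hG.card_eq_two_of_twLE_one (htw ▸ G.twLE_treewidth (by omega))
  obtain ⟨v⟩ := hG.1.1
  exact MGraph.nonempty_miso_necklace_two hV (MGraph.deg_eq_card_of_card_eq_two hV v ▸ hdeg v)
end

section
/- Let H be an Eulerian subgraph of an Eulerian multigraph G. If the minimum cycle number of H is strictly less than its maximum cycle number, i.e., c(H) < ν(H), then also c(G) < ν(G). -/
open scoped Classical

/-!
In an Eulerian graph every degree is even, so the complement `Fᶜ` of an even edge
set `F` is even as well, and by Veblen's theorem it has some cycle decomposition `D₀`. Adding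
`D₀` to a minimum and to a maximum cycle decomposition of `F` gives two cycle decompositions of
`G` whose sizes differ by `ν(F) - c(F) > 0`.

Veblen's theorem is proved by peeling off cycles. A cycle in a nonempty even edge set is found
by walking without ever leaving along the edge just used, which is always possible because
degrees are even; the segment of the walk between the first repetition of a vertex is a closed
walk with distinct vertices, and a closed walk traversing distinct edges visits every vertex
half as often as its degree.
-/

namespace MGraph

instance instFiniteV (G : MGraph) : Finite G.V := G.finV

instance instFiniteE (G : MGraph) : Finite G.E := G.finE

variable {G : MGraph}

lemma reachOn_symm {F : Set G.E} {a b : G.V} (h : G.ReachOn F a b) : G.ReachOn F b a := by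
  have : Std.Symm (G.AdjOn F) := ⟨fun _ _ ⟨e, he, hab⟩ => ⟨e, he, hab.trans Sym2.eq_swap⟩⟩
  exact Std.Symm.symm (r := Relation.ReflTransGen (G.AdjOn F)) _ _ h

lemma degOn_union {A B : Set G.E} (h : Disjoint A B) (v : G.V) :
    G.degOn (A ∪ B) v = G.degOn A v + G.degOn B v := by
  have hAB : Disjoint {e | e ∈ A ∧ v ∈ G.ends e} {e | e ∈ B ∧ v ∈ G.ends e} :=
    h.mono (fun _ he => he.1) (fun _ he => he.1)
  rw [degOn, degOn, degOn, ← Set.ncard_union_eq hAB]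
  congr 1
  ext e
  simp only [Set.mem_union, Set.mem_ofPred_eq]
  tauto

lemma even_degOn_sdiff {F C : Set G.E} {v : G.V} (hCF : C ⊆ F) (hF : Even (G.degOn F v))
    (hC : Even (G.degOn C v)) : Even (G.degOn (F \ C) v) := by
  rw [← Set.union_sdiff_cancel hCF, degOn_union Set.disjoint_sdiff_right, Nat.even_add] at hF
  exact hF.mp hC

lemma IsCycle.even_degOn {C : Set G.E} (hC : G.IsCycle C) (v : G.V) : Even (G.degOn C v) := by
  rcases hC.2.1 v with h | h <;> rw [h] <;> decide

section ClosedWalk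

/-! A closed walk `w 0, g 0, w 1, …, w (k - 1), g (k - 1), w 0`, indexed by `Fin k`. -/

variable {k : ℕ} [NeZero k] {w : Fin k → G.V} {g : Fin k → G.E}

lemma degOn_range_of_closedWalk (hg : Function.Injective g)
    (hends : ∀ t, G.ends (g t) = s(w t, w (t + 1))) (u : G.V) :
    G.degOn (Set.range g) u = 2 * {t | w t = u}.ncard := by
  have hinc : {e | e ∈ Set.range g ∧ u ∈ G.ends e} =
      g '' ({t | w t = u} ∪ {t | w (t + 1) = u}) := by
    ext e
    constructor
    · rintro ⟨⟨t, rfl⟩, hu⟩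
      rw [hends, Sym2.mem_iff] at hu
      exact ⟨t, hu.imp Eq.symm Eq.symm, rfl⟩
    · rintro ⟨t, ht, rfl⟩
      refine ⟨⟨t, rfl⟩, ?_⟩
      rw [hends, Sym2.mem_iff]
      exact ht.imp Eq.symm Eq.symm
  have hdisj : Disjoint {t | w t = u} {t | w (t + 1) = u} :=
    Set.disjoint_left.mpr fun t h₁ h₂ =>
      G.noLoop (g t) (by rw [hends, Sym2.mk_isDiag_iff, h₁, h₂])
  have hshift : {t | w (t + 1) = u}.ncard = {t | w t = u}.ncard :=
    Set.ncard_preimage_of_injective_subset_range (s := {t | w t = u}) (add_left_injective 1)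
      (fun t _ => ⟨t - 1, sub_add_cancel t 1⟩)
  rw [degOn, hinc, Set.ncard_image_of_injective _ hg, Set.ncard_union_eq hdisj, hshift, two_mul]

lemma injective_of_closedWalk (hw : Function.Injective w) (hback : ∀ t, g (t + 1) ≠ g t)
    (hends : ∀ t, G.ends (g t) = s(w t, w (t + 1))) : Function.Injective g := by
  intro s t hst
  have hst' := hends s
  rw [hst, hends t, Sym2.eq_iff] at hst'
  rcases hst' with ⟨h, -⟩ | ⟨h, -⟩
  · exact (hw h).symm
  · exact absurd (hw h ▸ hst.symm) (hback s)

open Fin.NatCast in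
lemma isCycle_range_of_closedWalk (hw : Function.Injective w) (hback : ∀ t, g (t + 1) ≠ g t)
    (hends : ∀ t, G.ends (g t) = s(w t, w (t + 1))) : G.IsCycle (Set.range g) := by
  refine ⟨Set.range_nonempty g, fun u => ?_, ?_⟩
  · rw [degOn_range_of_closedWalk (injective_of_closedWalk hw hback hends) hends]
    have : {t | w t = u}.ncard ≤ 1 :=
      (Set.ncard_le_one (Set.toFinite _)).mpr fun a ha b hb => hw (ha.trans hb.symm)
    omega
  have hreach : ∀ m : ℕ, G.ReachOn (Set.range g) (w 0) (w (m : Fin k)) := by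
    intro m
    induction m with
    | zero => exact Relation.ReflTransGen.refl
    | succ m ih =>
      rw [Nat.cast_succ]
      exact ih.tail ⟨g m, ⟨(m : Fin k), rfl⟩, hends (m : Fin k)⟩
  have hvisited : ∀ s a, a ∈ G.ends (g s) → G.ReachOn (Set.range g) (w 0) a := by
    intro s a ha
    rw [hends, Sym2.mem_iff] at ha
    rcases ha with rfl | rfl
    · simpa using hreach s
    · simpa using hreach (s + 1 : Fin k)
  rintro _ ⟨s, rfl⟩ _ ⟨t, rfl⟩ a b ha hb
  exact (reachOn_symm (hvisited s a ha)).trans (hvisited t b hb)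

end ClosedWalk

lemma exists_ne_mem_ends_of_even {F : Set G.E} (hF : ∀ v, Even (G.degOn F v)) {e : G.E}
    (he : e ∈ F) {x : G.V} (hx : x ∈ G.ends e) : ∃ f ∈ F, f ≠ e ∧ x ∈ G.ends f := by
  have hpos : 0 < G.degOn F x := (Set.ncard_pos (Set.toFinite _)).mpr ⟨e, he, hx⟩
  have hgt : 1 < G.degOn F x := by
    obtain ⟨m, hm⟩ := hF x
    omega
  obtain ⟨f, ⟨hf, hxf⟩, hfe⟩ := Set.exists_ne_of_one_lt_ncard hgt e
  exact ⟨f, hf, hfe, hxf⟩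

lemma exists_nonbacktracking_walk {F : Set G.E} (hF : ∀ v, Even (G.degOn F v))
    (hne : F.Nonempty) : ∃ (v : ℕ → G.V) (e : ℕ → G.E),
      ∀ i, e i ∈ F ∧ G.ends (e i) = s(v i, v (i + 1)) ∧ e (i + 1) ≠ e i := by
  let State := {p : G.E × G.V // p.1 ∈ F ∧ p.2 ∈ G.ends p.1}
  have hstep : ∀ p : State, ∃ q : State, q.1.1 ≠ p.1.1 ∧ q.1.2 = Sym2.Mem.other p.2.2 := by
    intro p
    obtain ⟨f, hf, hfp, hxf⟩ := exists_ne_mem_ends_of_even hF p.2.1 (Sym2.other_mem p.2.2)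
    exact ⟨⟨(f, _), hf, hxf⟩, hfp, rfl⟩
  choose next hnext_ne hnext_start using hstep
  obtain ⟨e₀, he₀⟩ := hne
  let walk : ℕ → State := fun i => next^[i] ⟨(e₀, _), he₀, Sym2.out_fst_mem (G.ends e₀)⟩
  have hwalk : ∀ i, walk (i + 1) = next (walk i) := fun i =>
    Function.iterate_succ_apply' next i _
  refine ⟨fun i => (walk i).1.2, fun i => (walk i).1.1, fun i => ⟨(walk i).2.1, ?_, ?_⟩⟩
  · simp only [hwalk, hnext_start]
    exact (Sym2.other_spec _).symm
  · simp only [hwalk]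
    exact hnext_ne _

lemma isCycle_of_walk_segment {v : ℕ → G.V} {e : ℕ → G.E}
    (hends : ∀ m, G.ends (e m) = s(v m, v (m + 1))) (hback : ∀ m, e (m + 1) ≠ e m) {i n : ℕ}
    (hinj : ∀ a ≤ n, ∀ b ≤ n, v (i + a) = v (i + b) → a = b) (hret : v (i + n + 1) = v i) :
    G.IsCycle (Set.range fun t : Fin (n + 1) => e (i + t)) := by
  have hn : n ≠ 0 := by
    rintro rfl
    exact G.noLoop (e i) (by rw [hends, Sym2.mk_isDiag_iff, ← hret])
  have hsucc : ∀ t : Fin (n + 1), v (i + ↑(t + 1)) = v (i + t + 1) := by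
    intro t
    by_cases ht : t = Fin.last n
    · subst ht
      rw [Fin.last_add_one, Fin.val_zero, Fin.val_last, add_zero, hret]
    · rw [Fin.val_add_one_of_lt (Fin.lt_last_iff_ne_last.mpr ht), add_assoc]
  have hclose : e i ≠ e (i + n) := by
    intro h
    have he := hends i
    rw [h, hends, hret, Sym2.eq_iff] at he
    rcases he with ⟨h₁, -⟩ | ⟨h₂, -⟩
    · have := hinj n le_rfl 0 (Nat.zero_le n) h₁
      omega
    · have := hinj n le_rfl 1 (by omega) h₂
      exact hback i (by rw [← this, h])
  refine isCycle_range_of_closedWalk (w := fun t : Fin (n + 1) => v (i + t)) ?_ ?_ ?_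
  · exact fun s t hst => Fin.ext (hinj s (Fin.is_le s) t (Fin.is_le t) hst)
  · intro t
    by_cases ht : t = Fin.last n
    · subst ht
      simpa [Fin.last_add_one] using hclose
    · rw [Fin.val_add_one_of_lt (Fin.lt_last_iff_ne_last.mpr ht), ← add_assoc]
      exact hback _
  · intro t
    rw [hsucc]
    exact hends _

lemma exists_isCycle_subset_of_even {F : Set G.E} (hF : ∀ v, Even (G.degOn F v))
    (hne : F.Nonempty) : ∃ C ⊆ F, G.IsCycle C := by
  obtain ⟨v, e, hwalk⟩ := exists_nonbacktracking_walk hF hne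
  have hrep : ∃ j, ∃ i < j, v i = v j := by
    obtain ⟨a, b, hab, hv⟩ := Finite.exists_ne_map_eq_of_infinite v
    rcases hab.lt_or_gt with h | h
    exacts [⟨b, a, h, hv⟩, ⟨a, b, h, hv.symm⟩]
  -- `Nat.find hrep` is the first step at which the walk revisits a vertex.
  obtain ⟨i, hij, hvij⟩ := Nat.find_spec hrep
  have hinj : ∀ a b, a < Nat.find hrep → b < Nat.find hrep → v a = v b → a = b := by
    intro a b ha hb hab
    by_contra hne
    rcases lt_or_gt_of_ne hne with h | h
    exacts [Nat.find_min hrep hb ⟨a, h, hab⟩, Nat.find_min hrep ha ⟨b, h, hab.symm⟩]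
  obtain ⟨n, hn⟩ : ∃ n, Nat.find hrep = i + n + 1 := ⟨Nat.find hrep - i - 1, by omega⟩
  refine ⟨_, ?_, isCycle_of_walk_segment (fun m => (hwalk m).2.1) (fun m => (hwalk m).2.2)
    (fun a ha b hb hab => ?_) (hn ▸ hvij.symm)⟩
  · rintro _ ⟨t, rfl⟩
    exact (hwalk _).1
  · have := hinj (i + a) (i + b) (by omega) (by omega) hab
    omega

lemma isCycleDecompOn_empty : G.IsCycleDecompOn ∅ ∅ := ⟨by simp, by simp⟩

lemma IsCycle.isCycleDecompOn_singleton {C : Set G.E} (hC : G.IsCycle C) :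
    G.IsCycleDecompOn C {C} :=
  ⟨by simpa using hC, fun _ he => ⟨C, ⟨rfl, he⟩, fun _ hC' => hC'.1⟩⟩

section Union

variable {F₁ F₂ : Set G.E} {D₁ D₂ : Set (Set G.E)}

lemma IsCycleDecompOn.union (h₁ : G.IsCycleDecompOn F₁ D₁) (h₂ : G.IsCycleDecompOn F₂ D₂)
    (hF : Disjoint F₁ F₂) : G.IsCycleDecompOn (F₁ ∪ F₂) (D₁ ∪ D₂) := by
  refine ⟨?_, ?_⟩
  · rintro C (hC | hC)
    · exact ⟨(h₁.1 C hC).1, (h₁.1 C hC).2.trans Set.subset_union_left⟩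
    · exact ⟨(h₂.1 C hC).1, (h₂.1 C hC).2.trans Set.subset_union_right⟩
  · rintro e (he | he)
    · obtain ⟨C, hC, huniq⟩ := h₁.2 e he
      refine ⟨C, ⟨Or.inl hC.1, hC.2⟩, ?_⟩
      rintro C' ⟨hC' | hC', heC'⟩
      · exact huniq C' ⟨hC', heC'⟩
      · exact absurd ((h₂.1 C' hC').2 heC') (Set.disjoint_left.mp hF he)
    · obtain ⟨C, hC, huniq⟩ := h₂.2 e he
      refine ⟨C, ⟨Or.inr hC.1, hC.2⟩, ?_⟩
      rintro C' ⟨hC' | hC', heC'⟩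
      · exact absurd ((h₁.1 C' hC').2 heC') (Set.disjoint_right.mp hF he)
      · exact huniq C' ⟨hC', heC'⟩

lemma IsCycleDecompOn.ncard_union (h₁ : G.IsCycleDecompOn F₁ D₁)
    (h₂ : G.IsCycleDecompOn F₂ D₂) (hF : Disjoint F₁ F₂) :
    (D₁ ∪ D₂).ncard = D₁.ncard + D₂.ncard := by
  refine Set.ncard_union_eq (Set.disjoint_left.mpr fun C hC₁ hC₂ => ?_)
  obtain ⟨e, he⟩ := (h₁.1 C hC₁).1.1
  exact Set.disjoint_left.mp hF ((h₁.1 C hC₁).2 he) ((h₂.1 C hC₂).2 he)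

end Union

/-- Veblen's theorem. -/
theorem exists_isCycleDecompOn_of_even {F : Set G.E} (hF : ∀ v, Even (G.degOn F v)) :
    ∃ D, G.IsCycleDecompOn F D := by
  induction hN : F.ncard using Nat.strong_induction_on generalizing F with
  | _ N ih =>
  rcases F.eq_empty_or_nonempty with rfl | hne
  · exact ⟨∅, isCycleDecompOn_empty⟩
  obtain ⟨C, hCF, hC⟩ := exists_isCycle_subset_of_even hF hne
  have hlt : (F \ C).ncard < N := hN ▸ Set.ncard_lt_ncard
    (Set.sdiff_ssubset_left_iff.mpr (hC.1.mono fun _ he => ⟨hCF he, he⟩))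
  obtain ⟨D, hD⟩ := ih _ hlt (fun v => even_degOn_sdiff hCF (hF v) (hC.even_degOn v)) rfl
  refine ⟨{C} ∪ D, ?_⟩
  simpa [Set.union_sdiff_cancel hCF] using
    hC.isCycleDecompOn_singleton.union hD Set.disjoint_sdiff_right

theorem IsEulerian.even_deg (hE : G.IsEulerian) (v : G.V) : Even (G.deg v) := by
  obtain ⟨vs, es, hlen, hends, hclosed, hnodup, hall⟩ := hE
  obtain ⟨n, hn⟩ | hnil : (∃ n, es.length = n + 1) ∨ es = [] := by
    rcases es with _ | ⟨_, es⟩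
    exacts [Or.inr rfl, Or.inl ⟨_, rfl⟩]
  swap
  · have : IsEmpty G.E := ⟨fun e => by simpa [hnil] using hall e⟩
    simp [deg, degOn, Set.eq_empty_of_isEmpty]
  -- The circuit as a closed walk on `Fin (n + 1)`; the last entry of `vs` repeats the first.
  let w : Fin (n + 1) → G.V := fun t => vs[(t : ℕ)]'(by omega)
  let g : Fin (n + 1) → G.E := fun t => es[(t : ℕ)]'(by omega)
  have hw : ∀ t : Fin (n + 1), vs[(t : ℕ)]? = some (w t) := fun t => List.getElem?_eq_getElem _
  have hwrap : vs[n + 1]? = vs[0]? := by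
    rw [← List.head?_eq_getElem?, hclosed, List.getLast?_eq_getElem?, hlen, hn,
      Nat.add_sub_cancel]
  have hnext : ∀ t : Fin (n + 1), vs[(t : ℕ) + 1]? = some (w (t + 1)) := by
    intro t
    by_cases ht : t = Fin.last n
    · subst ht
      rw [Fin.last_add_one, ← hw, Fin.val_last, Fin.val_zero]
      exact hwrap
    · rw [← hw, Fin.val_add_one_of_lt (Fin.lt_last_iff_ne_last.mpr ht)]
  have hg : Function.Injective g := fun s t hst => Fin.ext (hnodup.getElem_inj_iff.mp hst)
  have hrange : Set.range g = Set.univ := Set.eq_univ_of_forall fun e => by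
    obtain ⟨i, hi, rfl⟩ := List.getElem_of_mem (hall e)
    exact ⟨⟨i, by omega⟩, rfl⟩
  have hclosedWalk : ∀ t, G.ends (g t) = s(w t, w (t + 1)) := fun t =>
    hends t _ _ _ (List.getElem?_eq_getElem _) (hw t) (hnext t)
  rw [deg, ← hrange, degOn_range_of_closedWalk hg hclosedWalk]
  exact even_two_mul _

section CycleNumbers

variable {F : Set G.E} {D : Set (Set G.E)}

def cycleNumbers (G : MGraph) (F : Set G.E) : Set ℕ :=
  {n | ∃ D, G.IsCycleDecompOn F D ∧ D.ncard = n}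

lemma cOn_le (hD : G.IsCycleDecompOn F D) : G.cOn F ≤ D.ncard :=
  Nat.sInf_le ⟨D, hD, rfl⟩

lemma bddAbove_cycleNumbers : BddAbove (G.cycleNumbers F) :=
  ⟨Nat.card (Set G.E), by rintro _ ⟨D, -, rfl⟩; exact Set.ncard_le_card D⟩

lemma le_nuOn (hD : G.IsCycleDecompOn F D) : D.ncard ≤ G.nuOn F :=
  le_csSup bddAbove_cycleNumbers ⟨D, hD, rfl⟩

lemma exists_ncard_eq_cOn (hD : G.IsCycleDecompOn F D) :
    ∃ D', G.IsCycleDecompOn F D' ∧ D'.ncard = G.cOn F :=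
  Nat.sInf_mem (s := G.cycleNumbers F) ⟨D.ncard, D, hD, rfl⟩

lemma exists_ncard_eq_nuOn (hD : G.IsCycleDecompOn F D) :
    ∃ D', G.IsCycleDecompOn F D' ∧ D'.ncard = G.nuOn F :=
  Nat.sSup_mem (s := G.cycleNumbers F) ⟨D.ncard, D, hD, rfl⟩ bddAbove_cycleNumbers

end CycleNumbers

end MGraph

/-- if an even (Eulerian) subgraph has non-unique cycle number,
so does the whole Eulerian graph. -/
theorem subgraph_cycle_gap_lifts (G : MGraph) (hE : G.IsEulerian)
    (F : Set G.E) (hF : ∀ v, Even (G.degOn F v))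
    (h : G.cOn F < G.nuOn F) : G.c < G.nu := by
  obtain ⟨D₀, hD₀⟩ := MGraph.exists_isCycleDecompOn_of_even fun v =>
    MGraph.even_degOn_sdiff (Set.subset_univ F) (hE.even_deg v) (hF v)
  have hextend : ∀ {D}, G.IsCycleDecompOn F D →
      G.IsCycleDecompOn Set.univ (D ∪ D₀) ∧ (D ∪ D₀).ncard = D.ncard + D₀.ncard := fun hD =>
    ⟨Set.union_sdiff_cancel (Set.subset_univ F) ▸ hD.union hD₀ Set.disjoint_sdiff_right,
      hD.ncard_union hD₀ Set.disjoint_sdiff_right⟩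
  obtain ⟨D, hD⟩ := MGraph.exists_isCycleDecompOn_of_even hF
  obtain ⟨D₁, hD₁, hc⟩ := MGraph.exists_ncard_eq_cOn hD
  obtain ⟨D₂, hD₂, hnu⟩ := MGraph.exists_ncard_eq_nuOn hD
  calc G.c ≤ (D₁ ∪ D₀).ncard := MGraph.cOn_le (hextend hD₁).1
    _ < (D₂ ∪ D₀).ncard := by rw [(hextend hD₁).2, (hextend hD₂).2]; omega
    _ ≤ G.nu := MGraph.le_nuOn (hextend hD₂).1
end
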